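/- arXiv:1807.04497 — 3 statements merged into one kernel-verified Lean document; each statement's English description precedes it below -/
import Mathlib

section
/- Let n ≥ 3. Up to isomorphism of extensions, there is exactly one central extension 1 → C₂ → P → D_{2^{n-1}} → 1 such that the middle group P is isomorphic to the generalised quaternion group Q_{2^n} of order 2^n. -/
/-- A central extension `1 → C₂ → P → D_{2^{n-1}} → 1` of the dihedral group of order
`2^{n-1}` (realised as `DihedralGroup (2^(n-2))`) by the cyclic group `C₂` of order `2`. -/
structure CentralExtByC2OfDihedral (n : ℕ) where
  P : Type
  [grp : Group P]
  ι : Multiplicative (ZMod 2) →* P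
  π : P →* DihedralGroup (2 ^ (n - 2))
  ι_injective : Function.Injective ι
  π_surjective : Function.Surjective π
  central : ι.range ≤ Subgroup.center P
  exact : π.ker = ι.range

attribute [instance] CentralExtByC2OfDihedral.grp

/-- Isomorphism of central extensions: an isomorphism of the middle groups commuting with the
inclusion of `C₂` and the projection onto the dihedral group. -/
def CentralExtByC2OfDihedral.IsIsoTo {n : ℕ}
    (E E' : CentralExtByC2OfDihedral n) : Prop :=
  ∃ e : E.P ≃* E'.P, (∀ z, e (E.ι z) = E'.ι z) ∧ (∀ x, E'.π (e x) = E.π x)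



/-!
Let `z` be the image of the generator of `C₂` and `m = 2^(n-2)`. As `P ≅ Q_{4m}` has a unique
involution, `z` is that involution, so every element of `P` whose image in `D_{2m}` is an
involution of `D_{2m}` squares to `z`: its square lies in the kernel `{1, z}`, and it is not itself
in the kernel. Applying this to lifts `x` of the rotation `r 1` and `y` of the reflection `sr 0`,
and to `x^(m/2)` and `x y`, gives `x^m = y^2 = (x y)^2 = z`, which are the defining relations of
`Q_{4m}`. The resulting homomorphism `Q_{4m} → P` is compatible with the extension maps and hence
injective, so it is an isomorphism of the given extension with the standard extension
`Q_{4m} → D_{2m}`. Any two such extensions are therefore isomorphic.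
-/

open DihedralGroup QuaternionGroup Function

section ZModPow

variable {G : Type*} [Monoid G] {n : ℕ} [NeZero n] {x : G}

def zmodPowHom (hx : x ^ n = 1) : Multiplicative (ZMod n) →* G where
  toFun i := x ^ i.toAdd.val
  map_one' := by simp
  map_mul' i j := by
    simp only [toAdd_mul, ZMod.val_add, ← pow_add]
    exact (pow_eq_pow_mod _ hx).symm

lemma zmodPowHom_apply (hx : x ^ n = 1) (i : Multiplicative (ZMod n)) :
    zmodPowHom hx i = x ^ i.toAdd.val := rfl

lemma zmodPowHom_ofAdd_natCast (hx : x ^ n = 1) (k : ℕ) :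
    zmodPowHom hx (.ofAdd (k : ZMod n)) = x ^ k := by
  rw [zmodPowHom_apply, toAdd_ofAdd, ZMod.val_natCast, ← pow_eq_pow_mod _ hx]

end ZModPow

lemma Multiplicative.zmodTwo_eq_one_or (u : Multiplicative (ZMod 2)) : u = 1 ∨ u = ofAdd 1 := by
  revert u
  decide

lemma Multiplicative.zmodTwo_ofAdd_one_sq : (ofAdd 1 : Multiplicative (ZMod 2)) ^ 2 = 1 := by
  decide

lemma mem_range_zmodTwo_iff {G : Type*} [Group G] {f : Multiplicative (ZMod 2) →* G} {g : G} :
    g ∈ f.range ↔ g = 1 ∨ g = f (.ofAdd 1) := by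
  constructor
  · rintro ⟨u, rfl⟩
    rcases u.zmodTwo_eq_one_or with rfl | rfl
    exacts [.inl (map_one f), .inr rfl]
  · rintro (rfl | rfl)
    exacts [one_mem _, ⟨_, rfl⟩]

namespace ZMod

lemma natCast_self_add_self (m : ℕ) : (m : ZMod (2 * m)) + m = 0 := by
  rw [← Nat.cast_add, ← two_mul, ZMod.natCast_self]

variable {m : ℕ} [NeZero m]

lemma natCast_self_ne_zero : (m : ZMod (2 * m)) ≠ 0 := by
  rw [Ne, ZMod.natCast_eq_zero_iff]
  exact fun h => NeZero.ne m (Nat.eq_zero_of_dvd_of_lt h (by have := NeZero.pos m; omega))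

lemma eq_zero_or_eq_natCast_self_of_dvd_val {i : ZMod (2 * m)} (h : m ∣ i.val) :
    i = 0 ∨ i = m := by
  obtain ⟨c, hc⟩ := h
  have hlt : m * c < m * 2 := by linarith [ZMod.val_lt i]
  have hc2 : c < 2 := Nat.lt_of_mul_lt_mul_left hlt
  rw [← ZMod.natCast_zmod_val i, hc]
  interval_cases c <;> simp

lemma cast_eq_zero_iff {i : ZMod (2 * m)} : (i.cast : ZMod m) = 0 ↔ i = 0 ∨ i = m := by
  constructor
  · rw [ZMod.cast_eq_val, ZMod.natCast_eq_zero_iff]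
    exact eq_zero_or_eq_natCast_self_of_dvd_val
  · rintro (rfl | rfl)
    · exact ZMod.cast_zero
    · rw [ZMod.cast_natCast (dvd_mul_left m 2), ZMod.natCast_self]

lemma add_self_eq_zero_iff {i : ZMod (2 * m)} : i + i = 0 ↔ i = 0 ∨ i = m := by
  constructor
  · rw [← ZMod.natCast_zmod_val i, ← Nat.cast_add, ZMod.natCast_eq_zero_iff, ← two_mul]
    intro h
    rw [ZMod.natCast_zmod_val]
    exact eq_zero_or_eq_natCast_self_of_dvd_val (Nat.dvd_of_mul_dvd_mul_left two_pos h)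
  · rintro (rfl | rfl)
    exacts [add_zero 0, natCast_self_add_self m]

end ZMod

namespace QuaternionGroup

variable {m : ℕ}

def toDihedralGroup (m : ℕ) : QuaternionGroup m →* DihedralGroup m where
  toFun
    | a i => r i.cast
    | xa i => sr i.cast
  map_one' := by simp [one_def, DihedralGroup.one_def, -a_zero, -r_zero]
  map_mul' := by
    have hcast := ZMod.cast_add (R := ZMod m) (dvd_mul_left m 2)
    have hcast_sub := ZMod.cast_sub (R := ZMod m) (dvd_mul_left m 2)
    rintro (i | i) (j | j) <;>
      simp [hcast, hcast_sub, ZMod.cast_natCast (dvd_mul_left m 2)]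

@[simp] lemma toDihedralGroup_a (i : ZMod (2 * m)) : toDihedralGroup m (a i) = r i.cast := rfl

@[simp] lemma toDihedralGroup_xa (i : ZMod (2 * m)) : toDihedralGroup m (xa i) = sr i.cast := rfl

lemma a_natCast_self_sq : (a m : QuaternionGroup m) ^ 2 = 1 := by
  rw [sq, a_mul_a, ZMod.natCast_self_add_self, a_zero]

def ofZModTwo (m : ℕ) : Multiplicative (ZMod 2) →* QuaternionGroup m :=
  zmodPowHom a_natCast_self_sq

lemma ofZModTwo_ofAdd_one : ofZModTwo m (.ofAdd 1) = a m := by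
  have h := zmodPowHom_ofAdd_natCast (a_natCast_self_sq (m := m)) 1
  rwa [Nat.cast_one, pow_one] at h

lemma range_ofZModTwo_le_center : (ofZModTwo m).range ≤ Subgroup.center (QuaternionGroup m) := by
  intro q hq
  rw [Subgroup.mem_center_iff]
  rcases mem_range_zmodTwo_iff.1 hq with rfl | rfl
  · simp
  rw [ofZModTwo_ofAdd_one]
  rintro (j | j)
  · rw [a_mul_a, a_mul_a, add_comm]
  · rw [xa_mul_a, a_mul_xa, sub_eq_add_neg,
      ← eq_neg_iff_add_eq_zero.2 (ZMod.natCast_self_add_self m)]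

variable [NeZero m]

lemma a_natCast_self_ne_one : (a m : QuaternionGroup m) ≠ 1 := by
  simpa [one_def, -a_zero] using ZMod.natCast_self_ne_zero

lemma sq_eq_one_iff {q : QuaternionGroup m} : q ^ 2 = 1 ↔ q = 1 ∨ q = a m := by
  rcases q with i | i
  · simp [sq, one_def, ZMod.add_self_eq_zero_iff, -a_zero]
  · simpa [xa_sq, one_def, -a_zero] using ZMod.natCast_self_ne_zero

lemma ofZModTwo_injective : Injective (ofZModTwo m) := by
  refine (injective_iff_map_eq_one _).2 fun u hu => ?_
  rcases u.zmodTwo_eq_one_or with rfl | rfl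
  · rfl
  · exact absurd (ofZModTwo_ofAdd_one ▸ hu) a_natCast_self_ne_one

lemma toDihedralGroup_surjective : Surjective (toDihedralGroup m) := by
  rintro (j | j)
  · exact ⟨a (j.val : ZMod (2 * m)), by
      rw [toDihedralGroup_a, ZMod.cast_natCast (dvd_mul_left m 2), ZMod.natCast_zmod_val]⟩
  · exact ⟨xa (j.val : ZMod (2 * m)), by
      rw [toDihedralGroup_xa, ZMod.cast_natCast (dvd_mul_left m 2), ZMod.natCast_zmod_val]⟩

lemma ker_toDihedralGroup : (toDihedralGroup m).ker = (ofZModTwo m).range := by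
  ext q
  rw [MonoidHom.mem_ker, mem_range_zmodTwo_iff, ofZModTwo_ofAdd_one]
  rcases q with i | i
  · simp [DihedralGroup.one_def, one_def, ZMod.cast_eq_zero_iff, -a_zero, -r_zero]
  · simp [DihedralGroup.one_def, one_def, -a_zero, -r_zero]

section Lift

variable {G : Type*} [Group G] {x y : G}
  (hx : x ^ (2 * m) = 1) (hy : y ^ 2 = x ^ m) (hyx : y⁻¹ * x * y = x⁻¹)

def lift : QuaternionGroup m →* G where
  toFun
    | a i => zmodPowHom hx (.ofAdd i)
    | xa i => y * zmodPowHom hx (.ofAdd i)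
  map_one' := by simp [one_def, -a_zero]
  map_mul' := by
    set X := zmodPowHom hx
    have hXy : ∀ i, X (.ofAdd i) * y = y * X (.ofAdd (-i)) := by
      intro i
      have hconj := conj_pow (a := y⁻¹) (b := x) (i := (ZMod.val i))
      rw [inv_inv, hyx, inv_pow] at hconj
      rw [ofAdd_neg, map_inv, zmodPowHom_apply, toAdd_ofAdd, hconj, mul_assoc y⁻¹,
        mul_inv_cancel_left]
    have hy2 : y * y = X (.ofAdd (m : ZMod (2 * m))) := by
      rw [zmodPowHom_ofAdd_natCast, ← hy, sq]
    rintro (i | i) (j | j)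
    · simp only [a_mul_a, ofAdd_add, map_mul]
    · simp only [a_mul_xa, sub_eq_neg_add, ofAdd_add, map_mul, ← mul_assoc, hXy]
    · simp only [xa_mul_a, ofAdd_add, map_mul, mul_assoc]
    · rw [xa_mul_xa, add_sub_right_comm, sub_eq_add_neg]
      simp only [ofAdd_add, map_mul, ← mul_assoc]
      rw [mul_assoc y, hXy, ← mul_assoc, hy2]

@[simp] lemma lift_a (i : ZMod (2 * m)) : lift hx hy hyx (a i) = x ^ i.val := rfl

@[simp] lemma lift_xa (i : ZMod (2 * m)) : lift hx hy hyx (xa i) = y * x ^ i.val := rfl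

end Lift

end QuaternionGroup

section Extension

variable {m : ℕ} {P : Type*} [Group P] {ι : Multiplicative (ZMod 2) →* P}
  {π : P →* DihedralGroup m}

lemma map_eq_one_of_sq_eq_one [NeZero m] (hι : Injective ι) (he : π.ker = ι.range)
    (φ : P ≃* QuaternionGroup m) {p : P} (hp : p ^ 2 = 1) : π p = 1 := by
  have hz : φ (ι (.ofAdd 1)) = a m := by
    refine (QuaternionGroup.sq_eq_one_iff.1 ?_).resolve_left ?_
    · rw [← map_pow, ← map_pow, Multiplicative.zmodTwo_ofAdd_one_sq, map_one, map_one]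
    · rw [map_eq_one_iff _ φ.injective, (injective_iff_map_eq_one' ι).1 hι]
      decide
  rw [← MonoidHom.mem_ker, he, mem_range_zmodTwo_iff, ← φ.injective.eq_iff,
    ← φ.injective.eq_iff, hz, map_one]
  exact QuaternionGroup.sq_eq_one_iff.1 (by rw [← map_pow, hp, map_one])

lemma sq_eq_of_map_sq_eq_one {z : P} (hker : ∀ p, π p = 1 ↔ p = 1 ∨ p = z)
    (hinv : ∀ p : P, p ^ 2 = 1 → π p = 1) (p : P) (hp : π p ≠ 1) (hp2 : π p ^ 2 = 1) :
    p ^ 2 = z :=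
  ((hker _).1 (by rwa [map_pow])).resolve_left fun h => hp (hinv p h)

lemma exists_quaternionGroup_hom_comm [NeZero m] (hm : Even m) (hπ : Surjective π)
    (he : π.ker = ι.range) (hinv : ∀ p : P, p ^ 2 = 1 → π p = 1) :
    ∃ f : QuaternionGroup m →* P,
      (∀ u, f (ofZModTwo m u) = ι u) ∧ ∀ q, π (f q) = toDihedralGroup m q := by
  set z := ι (.ofAdd 1)
  have hker : ∀ p, π p = 1 ↔ p = 1 ∨ p = z := fun p => by
    rw [← MonoidHom.mem_ker, he, mem_range_zmodTwo_iff]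
  have hz := sq_eq_of_map_sq_eq_one hker hinv
  obtain ⟨x, hx⟩ := hπ (r 1)
  obtain ⟨y, hy⟩ := hπ (sr 0)
  have hxm : x ^ m = z := by
    obtain ⟨k, rfl⟩ := hm
    have hk : (k : ZMod (k + k)) ≠ 0 := by
      rw [Ne, ZMod.natCast_eq_zero_iff]
      intro h
      have := NeZero.ne (k + k)
      have := Nat.le_of_dvd (by omega) h
      omega
    rw [← two_mul, pow_mul', hz (x ^ k)]
    · simpa [hx, DihedralGroup.one_def, -r_zero] using hk
    · rw [map_pow, hx, r_one_pow, sq, r_mul_r, ← Nat.cast_add, ZMod.natCast_self, r_zero]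
  have hyy : y ^ 2 = z := hz y (by simp [hy, DihedralGroup.one_def, -r_zero]) (by simp [hy, sq])
  have hxy : (x * y) ^ 2 = z := hz (x * y) (by simp [hx, hy, DihedralGroup.one_def, -r_zero])
    (by simp [hx, hy, sq])
  have hx2m : x ^ (2 * m) = 1 := by
    rw [mul_comm, pow_mul, hxm, ← map_pow, Multiplicative.zmodTwo_ofAdd_one_sq, map_one]
  have hyx : y⁻¹ * x * y = x⁻¹ := by
    have h : x * y * x = y :=
      mul_right_cancel (b := y) <| by rw [← sq y, hyy, ← hxy, sq, ← mul_assoc]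
    refine eq_inv_of_mul_eq_one_left ?_
    rw [mul_assoc y⁻¹ x y, mul_assoc, h, inv_mul_cancel]
  refine ⟨lift hx2m (hyy.trans hxm.symm) hyx, fun u => ?_, ?_⟩
  · rcases u.zmodTwo_eq_one_or with rfl | rfl
    · simp
    · rw [ofZModTwo_ofAdd_one, lift_a, ZMod.val_natCast, Nat.mod_eq_of_lt, hxm]
      have := NeZero.pos m
      omega
  · rintro (i | i)
    · rw [lift_a, map_pow, hx, r_one_pow, toDihedralGroup_a, ZMod.cast_eq_val]
    · rw [lift_xa, map_mul, map_pow, hx, hy, r_one_pow, sr_mul_r, zero_add, toDihedralGroup_xa,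
        ZMod.cast_eq_val]

lemma quaternionGroup_hom_injective_of_comm [NeZero m] (hι : Injective ι)
    {f : QuaternionGroup m →* P} (hfι : ∀ u, f (ofZModTwo m u) = ι u)
    (hfπ : ∀ q, π (f q) = toDihedralGroup m q) :
    Injective f := by
  refine (injective_iff_map_eq_one f).2 fun q hq => ?_
  obtain ⟨u, rfl⟩ : q ∈ (ofZModTwo m).range := by
    rw [← ker_toDihedralGroup, MonoidHom.mem_ker, ← hfπ, hq, map_one]
  rw [hfι, (injective_iff_map_eq_one' ι).1 hι] at hq
  rw [hq, map_one]

theorem exists_mulEquiv_quaternionGroup_comm [NeZero m] (hm : Even m) (hι : Injective ι)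
    (hπ : Surjective π) (he : π.ker = ι.range) (φ : P ≃* QuaternionGroup m) :
    ∃ e : P ≃* QuaternionGroup m,
      (∀ u, e (ι u) = ofZModTwo m u) ∧ ∀ p, toDihedralGroup m (e p) = π p := by
  obtain ⟨f, hfι, hfπ⟩ :=
    exists_quaternionGroup_hom_comm hm hπ he fun _ => map_eq_one_of_sq_eq_one hι he φ
  have : Finite P := .of_equiv _ φ.symm.toEquiv
  let F := MulEquiv.ofBijective f <| (Nat.bijective_iff_injective_and_card f).2
    ⟨quaternionGroup_hom_injective_of_comm hι hfι hfπ, Nat.card_congr φ.symm.toEquiv⟩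
  refine ⟨F.symm, fun u => F.symm_apply_eq.2 (hfι u).symm, fun p => ?_⟩
  rw [← hfπ]
  exact congrArg π (F.apply_symm_apply p)

end Extension

namespace CentralExtByC2OfDihedral

def quaternion (n : ℕ) : CentralExtByC2OfDihedral n where
  P := QuaternionGroup (2 ^ (n - 2))
  ι := ofZModTwo _
  π := toDihedralGroup _
  ι_injective := ofZModTwo_injective
  π_surjective := toDihedralGroup_surjective
  central := range_ofZModTwo_le_center
  exact := ker_toDihedralGroup

variable {n : ℕ}

lemma IsIsoTo.symm {E E' : CentralExtByC2OfDihedral n} (h : E.IsIsoTo E') : E'.IsIsoTo E := by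
  obtain ⟨e, hι, hπ⟩ := h
  refine ⟨e.symm, fun u => e.symm_apply_eq.2 (hι u).symm, fun p => ?_⟩
  rw [← hπ, e.apply_symm_apply]

lemma IsIsoTo.trans {E E' E'' : CentralExtByC2OfDihedral n} (h : E.IsIsoTo E')
    (h' : E'.IsIsoTo E'') : E.IsIsoTo E'' := by
  obtain ⟨e, hι, hπ⟩ := h
  obtain ⟨e', hι', hπ'⟩ := h'
  exact ⟨e.trans e', fun u => by simp [hι, hι'], fun p => by simp [hπ, hπ']⟩

lemma isIsoTo_quaternion (E : CentralExtByC2OfDihedral n) (hn : 3 ≤ n)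
    (φ : E.P ≃* QuaternionGroup (2 ^ (n - 2))) : E.IsIsoTo (quaternion n) :=
  exists_mulEquiv_quaternionGroup_comm (Nat.even_pow.2 ⟨even_two, by omega⟩) E.ι_injective
    E.π_surjective E.exact φ

end CentralExtByC2OfDihedral

/-- For `n ≥ 3` there is, up to isomorphism of extensions, exactly one central extension
`1 → C₂ → P → D_{2^{n-1}} → 1` whose middle group `P` is isomorphic to the generalised
quaternion group `Q_{2^n}` of order `2^n` (realised as `QuaternionGroup (2^(n-2))`). -/
theorem unique_central_extension_generalised_quaternion (n : ℕ) (hn : 3 ≤ n) :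
    (∃ E : CentralExtByC2OfDihedral n,
        Nonempty (E.P ≃* QuaternionGroup (2 ^ (n - 2)))) ∧
    (∀ E E' : CentralExtByC2OfDihedral n,
        Nonempty (E.P ≃* QuaternionGroup (2 ^ (n - 2))) →
        Nonempty (E'.P ≃* QuaternionGroup (2 ^ (n - 2))) →
        E.IsIsoTo E') := by
  refine ⟨⟨.quaternion n, ⟨MulEquiv.refl _⟩⟩, fun E E' ⟨φ⟩ ⟨φ'⟩ => ?_⟩
  exact (E.isIsoTo_quaternion hn φ).trans (E'.isIsoTo_quaternion hn φ').symm
end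

section
/- Every group P admitting a central extension 1 → C₂ → P → D_{2^{n-1}} → 1 (n ≥ 3) has a presentation of the form ⟨r, s, t | rt=tr, st=ts, t²=1, r²=t^a, s²=t^b, (rs)^{2^{n-2}}=t^c⟩ for some a, b, c ∈ {0,1}, where t generates the central C₂ and r, s map to the two standard reflection generators of D_{2^{n-1}}. -/
/-!
Lift the reflections `sr 0`, `sr 1` to `r, s ∈ P` and let `t` generate the kernel `C₂`. Then
`r²`, `s²` and `(rs)^{2^{n-2}}` lie in the kernel, which fixes `a, b, c`, and the presented group
`G` maps onto `P`: the lifts generate `P` because they generate modulo the kernel. In `G` every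
element has the form `(rs)^m s^j t^i` with `m < 2^{n-2}` and `i, j < 2` (right multiplication by
a generator preserves this shape), so `|G| ≤ 4 · 2^{n-2} = |P|` and the surjection is an
isomorphism.
-/

/-- The relations `rt=tr, st=ts, t² = 1, r² = tᵃ, s² = tᵇ, (rs)^{2^{n-2}} = tᶜ` on three
generators `r = of 0`, `s = of 1`, `t = of 2`. -/
def quotD2Rels (n : ℕ) (a b c : Fin 2) : Set (FreeGroup (Fin 3)) :=
  let r : FreeGroup (Fin 3) := FreeGroup.of 0
  let s : FreeGroup (Fin 3) := FreeGroup.of 1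
  let t : FreeGroup (Fin 3) := FreeGroup.of 2
  {r * t * r⁻¹ * t⁻¹, s * t * s⁻¹ * t⁻¹, t ^ 2,
    r ^ 2 * (t ^ (a : ℕ))⁻¹, s ^ 2 * (t ^ (b : ℕ))⁻¹,
    (r * s) ^ 2 ^ (n - 2) * (t ^ (c : ℕ))⁻¹}

theorem Set.Finite.eq_univ_of_forall_mul_mem {G : Type*} [Group G] {S T : Set G}
    (hS : S.Finite) (h1 : 1 ∈ S) (hT : Subgroup.closure T = ⊤)
    (hmul : ∀ p ∈ S, ∀ g ∈ T, p * g ∈ S) : S = Set.univ := by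
  suffices h : ∀ g ∈ Subgroup.closure T, Set.MapsTo (· * g) S S from
    Set.eq_univ_of_forall fun g => by simpa using h g (hT ▸ Subgroup.mem_top g) h1
  intro g hg
  induction hg using Subgroup.closure_induction with
  | mem g hg => exact fun p hp => hmul p hp g hg
  | one => exact fun p hp => by simpa using hp
  | mul g g' _ _ hg hg' => exact fun p hp => by simpa [mul_assoc] using hg' (hg hp)
  | inv g _ hg =>
    -- right multiplication by `g` maps the finite set `S` injectively into itself, hence onto it
    obtain ⟨-, -, hsurj⟩ := (hS.injOn_iff_bijOn_of_mapsTo hg).mp (mul_left_injective g).injOn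
    intro p hp
    obtain ⟨q, hq, rfl⟩ := hsurj hp
    simpa using hq

open DihedralGroup in
theorem DihedralGroup.closure_sr_zero_sr_one (n : ℕ) :
    Subgroup.closure {sr 0, sr 1} = (⊤ : Subgroup (DihedralGroup n)) := by
  have h0 : sr 0 ∈ Subgroup.closure {sr (0 : ZMod n), sr 1} := Subgroup.subset_closure (by simp)
  have h1 : sr 1 ∈ Subgroup.closure {sr (0 : ZMod n), sr 1} := Subgroup.subset_closure (by simp)
  have hr : ∀ i : ZMod n, r i ∈ Subgroup.closure {sr 0, sr 1} := fun i => by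
    obtain ⟨k, rfl⟩ := ZMod.intCast_surjective i
    rw [← r_one_zpow, show r (1 : ZMod n) = sr 0 * sr 1 by rw [sr_mul_sr, sub_zero]]
    exact zpow_mem (mul_mem h0 h1) k
  rw [Subgroup.eq_top_iff']
  rintro (i | i)
  · exact hr i
  · simpa using mul_mem h0 (hr i)

structure CentralDihedralRelations {G : Type*} [Group G] (r s t : G) (N A B C : ℕ) : Prop where
  commute_r : Commute r t
  commute_s : Commute s t
  t_sq : t ^ 2 = 1
  r_sq : r ^ 2 = t ^ A
  s_sq : s ^ 2 = t ^ B
  mul_pow : (r * s) ^ N = t ^ C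

namespace CentralDihedralRelations

variable {G : Type*} [Group G] {r s t : G} {N A B C : ℕ}

def normalForm (r s t : G) (N : ℕ) (p : Fin N × Fin 2 × Fin 2) : G :=
  (r * s) ^ (p.1 : ℕ) * s ^ (p.2.1 : ℕ) * t ^ (p.2.2 : ℕ)

theorem t_pow_mul_self (h : CentralDihedralRelations r s t N A B C) (k : ℕ) :
    t ^ k * t ^ k = 1 := by
  rw [← pow_add, ← two_mul, pow_mul, h.t_sq, one_pow]

theorem t_pow_eq_of_mod_two_eq (h : CentralDihedralRelations r s t N A B C) {k l : ℕ}
    (hkl : k % 2 = l % 2) : t ^ k = t ^ l := by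
  rw [pow_eq_pow_mod k h.t_sq, pow_eq_pow_mod l h.t_sq, hkl]

theorem r_eq (h : CentralDihedralRelations r s t N A B C) : r = r * s * s * t ^ B := by
  rw [mul_assoc r, ← sq, h.s_sq, mul_assoc, h.t_pow_mul_self, mul_one]

theorem mul_r (h : CentralDihedralRelations r s t N A B C) (g : G) :
    g * r = g * (r * s) * s * t ^ B := by
  conv_lhs => rw [h.r_eq]
  simp only [mul_assoc]

theorem s_mul_r (h : CentralDihedralRelations r s t N A B C) (hN : 0 < N) :
    s * r = (r * s) ^ (N - 1) * t ^ (A + B + C) := by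
  refine mul_left_cancel (a := r * s) ?_
  calc r * s * (s * r) = t ^ (A + B) := by
        rw [mul_assoc, ← mul_assoc s, ← sq, h.s_sq, ← mul_assoc, (h.commute_r.pow_right B).eq,
          mul_assoc, ← sq, h.r_sq, ← pow_add, add_comm]
    _ = (r * s) ^ N * t ^ (A + B + C) := by
        rw [h.mul_pow, ← pow_add]
        exact h.t_pow_eq_of_mod_two_eq (by omega)
    _ = r * s * ((r * s) ^ (N - 1) * t ^ (A + B + C)) := by
        rw [← mul_assoc, ← pow_succ', Nat.sub_add_cancel hN]

theorem mul_pow_eq_mod (h : CentralDihedralRelations r s t N A B C) (m : ℕ) :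
    (r * s) ^ m = (r * s) ^ (m % N) * t ^ (C * (m / N)) := by
  conv_lhs => rw [← Nat.mod_add_div m N, pow_add, pow_mul, h.mul_pow, ← pow_mul]

theorem pow_mul_pow_mul_pow_mem_range_normalForm (h : CentralDihedralRelations r s t N A B C)
    (hN : 0 < N) (m : ℕ) {j : ℕ} (hj : j < 2) (i : ℕ) :
    (r * s) ^ m * s ^ j * t ^ i ∈ Set.range (normalForm r s t N) := by
  refine ⟨(⟨m % N, Nat.mod_lt m hN⟩, ⟨j, hj⟩, ⟨(C * (m / N) + i) % 2, Nat.mod_lt _ two_pos⟩),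
    ?_⟩
  rw [normalForm, ← pow_eq_pow_mod _ h.t_sq, pow_add, h.mul_pow_eq_mod m, mul_assoc _ (t ^ _),
    ← (h.commute_s.pow_pow j _).eq, mul_assoc, mul_assoc, mul_assoc]

theorem normalForm_mul_mem_range (h : CentralDihedralRelations r s t N A B C) (hN : 0 < N)
    (p : Fin N × Fin 2 × Fin 2) {g : G} (hg : g ∈ ({r, s, t} : Set G)) :
    normalForm r s t N p * g ∈ Set.range (normalForm r s t N) := by
  obtain ⟨m, ⟨j, hj⟩, i⟩ := p
  have mem := h.pow_mul_pow_mul_pow_mem_range_normalForm hN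
  rcases hg with hg | hg | hg <;> subst g
  · interval_cases j
    · convert mem (m + 1) one_lt_two (B + i) using 1
      rw [normalForm, pow_zero, mul_one, mul_assoc, ← (h.commute_r.pow_right i).eq, ← mul_assoc,
        h.mul_r, pow_succ, pow_one, pow_add]
      simp only [mul_assoc]
    · convert mem (m + (N - 1)) two_pos (A + B + C + i) using 1
      rw [normalForm, pow_one, pow_zero, mul_one, mul_assoc, ← (h.commute_r.pow_right i).eq,
        ← mul_assoc, mul_assoc _ s r, h.s_mul_r hN, pow_add (r * s), pow_add t (A + B + C)]
      simp only [mul_assoc]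
  · interval_cases j
    · convert mem m one_lt_two i using 1
      rw [normalForm, pow_zero, mul_one, pow_one, mul_assoc, ← (h.commute_s.pow_right i).eq,
        mul_assoc]
    · convert mem m two_pos (B + i) using 1
      rw [normalForm, pow_one, pow_zero, mul_one, mul_assoc, ← (h.commute_s.pow_right i).eq,
        ← mul_assoc, mul_assoc _ s s, ← sq, h.s_sq, pow_add, mul_assoc]
  · convert mem m hj (i + 1) using 1
    rw [normalForm, pow_succ, ← mul_assoc]

theorem surjective_normalForm (h : CentralDihedralRelations r s t N A B C) (hN : 0 < N)
    (hgen : Subgroup.closure {r, s, t} = ⊤) : Function.Surjective (normalForm r s t N) := by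
  refine Set.range_eq_univ.mp (Set.Finite.eq_univ_of_forall_mul_mem (Set.finite_range _) ?_ hgen ?_)
  · simpa only [pow_zero, mul_one] using h.pow_mul_pow_mul_pow_mem_range_normalForm hN 0 two_pos 0
  · rintro _ ⟨p, rfl⟩ g hg
    exact h.normalForm_mul_mem_range hN p hg

end CentralDihedralRelations

theorem lift_eq_one_of_mem_quotD2Rels_iff {G : Type*} [Group G] (n : ℕ) (a b c : Fin 2)
    (f : Fin 3 → G) :
    (∀ w ∈ quotD2Rels n a b c, FreeGroup.lift f w = 1) ↔
      CentralDihedralRelations (f 0) (f 1) (f 2) (2 ^ (n - 2)) a b c := by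
  simp only [quotD2Rels, Set.mem_insert_iff, Set.mem_singleton_iff, forall_eq_or_imp, forall_eq,
    ← commutatorElement_def, map_commutatorElement, map_mul, map_inv, map_pow,
    FreeGroup.lift_apply_of, commutatorElement_eq_one_iff_commute, mul_inv_eq_one]
  exact ⟨fun ⟨h1, h2, h3, h4, h5, h6⟩ => ⟨h1, h2, h3, h4, h5, h6⟩,
    fun ⟨h1, h2, h3, h4, h5, h6⟩ => ⟨h1, h2, h3, h4, h5, h6⟩⟩

theorem centralDihedralRelations_of (n : ℕ) (a b c : Fin 2) :
    CentralDihedralRelations (PresentedGroup.of 0 : PresentedGroup (quotD2Rels n a b c))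
      (PresentedGroup.of 1) (PresentedGroup.of 2) (2 ^ (n - 2)) a b c := by
  refine (lift_eq_one_of_mem_quotD2Rels_iff n a b c PresentedGroup.of).mp fun w hw => ?_
  rw [show FreeGroup.lift PresentedGroup.of = PresentedGroup.mk (quotD2Rels n a b c) from
    FreeGroup.ext_hom _ _ fun _ => FreeGroup.lift_apply_of]
  exact PresentedGroup.one_of_mem hw

theorem exists_mulEquiv_presentedGroup_quotD2Rels {P : Type*} [Group P] [Finite P] {n : ℕ}
    {a b c : Fin 2} {r s t : P} (h : CentralDihedralRelations r s t (2 ^ (n - 2)) a b c)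
    (hgen : Subgroup.closure {r, s, t} = ⊤) (hcard : 2 ^ (n - 2) * 2 * 2 ≤ Nat.card P) :
    ∃ e : PresentedGroup (quotD2Rels n a b c) ≃* P,
      e (PresentedGroup.of 0) = r ∧ e (PresentedGroup.of 1) = s ∧
        e (PresentedGroup.of 2) = t := by
  have hrels := (lift_eq_one_of_mem_quotD2Rels_iff n a b c ![r, s, t]).mpr h
  set φ := PresentedGroup.toGroup hrels
  have hφ : Function.Surjective φ := by
    rw [← MonoidHom.range_eq_top, eq_top_iff, ← hgen, Subgroup.closure_le]
    rintro _ (rfl | rfl | rfl)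
    exacts [⟨_, PresentedGroup.toGroup.of hrels (x := 0)⟩,
      ⟨_, PresentedGroup.toGroup.of hrels (x := 1)⟩,
      ⟨_, PresentedGroup.toGroup.of hrels (x := 2)⟩]
  have hgenG : Subgroup.closure {PresentedGroup.of 0, PresentedGroup.of 1, PresentedGroup.of 2} =
      (⊤ : Subgroup (PresentedGroup (quotD2Rels n a b c))) := by
    rw [← PresentedGroup.closure_range_of]
    congr 1
    ext
    simp [Fin.exists_fin_succ, eq_comm]
  have hnf := (centralDihedralRelations_of n a b c).surjective_normalForm (by positivity) hgenG
  have : Finite (PresentedGroup (quotD2Rels n a b c)) := Finite.of_surjective _ hnf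
  have hcardG := Nat.card_le_card_of_surjective _ hnf
  simp only [Nat.card_eq_fintype_card, Fintype.card_prod, Fintype.card_fin] at hcardG
  have hbij : Function.Bijective φ := (Nat.bijective_iff_surjective_and_card φ).mpr
    ⟨hφ, le_antisymm (by omega) (Nat.card_le_card_of_surjective φ hφ)⟩
  exact ⟨MulEquiv.ofBijective φ hbij, PresentedGroup.toGroup.of hrels,
    PresentedGroup.toGroup.of hrels, PresentedGroup.toGroup.of hrels⟩

section CentralExtension

variable {P Q : Type*} [Group P] [Group Q] {ι : Multiplicative (ZMod 2) →* P} {π : P →* Q}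

theorem exists_eq_pow_of_map_eq_one (hexact : π.ker = ι.range) {p : P} (hp : π p = 1) :
    ∃ k : Fin 2, p = ι (Multiplicative.ofAdd 1) ^ (k : ℕ) := by
  obtain ⟨z, rfl⟩ : p ∈ ι.range := hexact ▸ hp
  have hpow : ∀ z : Multiplicative (ZMod 2), ∃ k : Fin 2,
      z = Multiplicative.ofAdd 1 ^ (k : ℕ) := by
    decide
  obtain ⟨k, rfl⟩ := hpow z
  exact ⟨k, map_pow ι _ _⟩

theorem closure_eq_top_of_closure_image_eq_top (hexact : π.ker = ι.range) {S T : Set P}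
    (hST : S ⊆ T) (hS : Subgroup.closure (π '' S) = ⊤)
    (ht : ι (Multiplicative.ofAdd 1) ∈ T) :
    Subgroup.closure T = ⊤ := by
  have hker : π.ker ≤ Subgroup.closure T := fun p hp => by
    obtain ⟨k, rfl⟩ := exists_eq_pow_of_map_eq_one hexact hp
    exact pow_mem (Subgroup.subset_closure ht) _
  have hmap : (Subgroup.closure T).map π = ⊤ := by
    rw [MonoidHom.map_closure, eq_top_iff, ← hS]
    exact Subgroup.closure_mono (Set.image_mono hST)
  rw [← Subgroup.comap_map_eq_self hker, hmap, Subgroup.comap_top]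

theorem card_eq_card_mul_two (hι : Function.Injective ι) (hπ : Function.Surjective π)
    (hexact : π.ker = ι.range) : Nat.card P = Nat.card Q * 2 := by
  rw [π.ker.card_eq_card_quotient_mul_card_subgroup,
    Nat.card_congr (QuotientGroup.quotientKerEquivOfSurjective π hπ).toEquiv, hexact,
    ← Nat.card_congr (MonoidHom.ofInjective hι).toEquiv]
  simp

end CentralExtension

theorem central_extension_of_dihedral_has_presentation_general
    (n : ℕ) (P : Type) [Group P]
    (ι : Multiplicative (ZMod 2) →* P)
    (π : P →* DihedralGroup (2 ^ (n - 2)))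
    (hι : Function.Injective ι) (hπ : Function.Surjective π)
    (hcentral : ι.range ≤ Subgroup.center P)
    (hexact : π.ker = ι.range) :
    ∃ (a b c : Fin 2) (e : PresentedGroup (quotD2Rels n a b c) ≃* P),
      π (e (PresentedGroup.of 0)) = DihedralGroup.sr 0 ∧
      π (e (PresentedGroup.of 1)) = DihedralGroup.sr 1 ∧
      e (PresentedGroup.of 2) = ι (Multiplicative.ofAdd (1 : ZMod 2)) := by
  obtain ⟨r, hr⟩ := hπ (DihedralGroup.sr 0)
  obtain ⟨s, hs⟩ := hπ (DihedralGroup.sr 1)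
  set t := ι (Multiplicative.ofAdd 1)
  have ht : t ∈ Subgroup.center P := hcentral ⟨_, rfl⟩
  obtain ⟨a, ha⟩ := exists_eq_pow_of_map_eq_one hexact (p := r ^ 2) (by simp [hr, sq])
  obtain ⟨b, hb⟩ := exists_eq_pow_of_map_eq_one hexact (p := s ^ 2) (by simp [hs, sq])
  obtain ⟨c, hc⟩ := exists_eq_pow_of_map_eq_one hexact (p := (r * s) ^ 2 ^ (n - 2))
    (by simp [hr, hs, DihedralGroup.sr_mul_sr])
  have hrel : CentralDihedralRelations r s t (2 ^ (n - 2)) a b c :=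
    ⟨Subgroup.mem_center_iff.mp ht r, Subgroup.mem_center_iff.mp ht s,
      by rw [← map_pow, show Multiplicative.ofAdd (1 : ZMod 2) ^ 2 = 1 by decide, map_one],
      ha, hb, hc⟩
  have hgen : Subgroup.closure {r, s, t} = ⊤ :=
    closure_eq_top_of_closure_image_eq_top hexact (S := {r, s}) (by simp [Set.insert_subset_iff])
      (by rw [Set.image_pair, hr, hs, DihedralGroup.closure_sr_zero_sr_one])
      (Set.mem_insert_of_mem _ (Set.mem_insert_of_mem _ rfl))
  have hcard := card_eq_card_mul_two hι hπ hexact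
  rw [DihedralGroup.nat_card] at hcard
  have : Finite P := Nat.finite_of_card_ne_zero (by rw [hcard]; positivity)
  obtain ⟨e, he0, he1, he2⟩ := exists_mulEquiv_presentedGroup_quotD2Rels hrel hgen (by omega)
  exact ⟨a, b, c, e, by rw [he0, hr], by rw [he1, hs], he2⟩

/-- Every group `P` admitting a central extension `1 → C₂ → P → D_{2^{n-1}} → 1` (`n ≥ 3`,
with `D_{2^{n-1}}` realised as `DihedralGroup (2^(n-2))`) has a presentation
`⟨r, s, t ∣ rt=tr, st=ts, t²=1, r²=tᵃ, s²=tᵇ, (rs)^{2^{n-2}}=tᶜ⟩` for some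
`a, b, c ∈ {0,1}`, where `t` generates the central `C₂` and `r, s` lift the two standard
reflection generators `sr 0`, `sr 1` of the dihedral group. -/
theorem central_extension_of_dihedral_has_presentation
    (n : ℕ) (hn : 3 ≤ n) (P : Type) [Group P]
    (ι : Multiplicative (ZMod 2) →* P)
    (π : P →* DihedralGroup (2 ^ (n - 2)))
    (hι : Function.Injective ι) (hπ : Function.Surjective π)
    (hcentral : ι.range ≤ Subgroup.center P)
    (hexact : π.ker = ι.range) :
    ∃ (a b c : Fin 2) (e : PresentedGroup (quotD2Rels n a b c) ≃* P),
      π (e (PresentedGroup.of 0)) = DihedralGroup.sr 0 ∧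
      π (e (PresentedGroup.of 1)) = DihedralGroup.sr 1 ∧
      e (PresentedGroup.of 2) = ι (Multiplicative.ofAdd (1 : ZMod 2)) :=
  central_extension_of_dihedral_has_presentation_general n P ι π hι hπ hcentral hexact
end

section
/- Let k be a field of characteristic p > 0, G a finite group, Q ≤ G a subgroup, Z a subgroup of Z(G) ∩ Q, and write Ḡ = G/Z, Q̄ = Q/Z. Then Sc(G, Q) ⊗_{kG} kḠ ≅ Sc(Ḡ, Q̄) as right kḠ-modules, where Sc denotes the Scott module. -/
open scoped TensorProduct

/-- `W` is a Scott submodule `Sc(G, Q)` of the permutation module `k[G/Q] = k_Q↑^G`: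
an indecomposable `G`-invariant direct summand whose top contains the trivial module. -/
def IsScottSubmodule (k : Type) [Field k] {G : Type} [Group G] (Q : Subgroup G)
    (W : Submodule k ((G ⧸ Q) →₀ k)) : Prop :=
  (∀ g : G, W.map (Finsupp.lmapDomain k k (fun x : G ⧸ Q => g • x)) ≤ W) ∧
  (∃ C : Submodule k ((G ⧸ Q) →₀ k),
      (∀ g : G, C.map (Finsupp.lmapDomain k k (fun x : G ⧸ Q => g • x)) ≤ C) ∧ IsCompl W C) ∧
  W ≠ ⊥ ∧
  (∀ A B : Submodule k ((G ⧸ Q) →₀ k), A ≤ W → B ≤ W →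
      (∀ g : G, A.map (Finsupp.lmapDomain k k (fun x : G ⧸ Q => g • x)) ≤ A) →
      (∀ g : G, B.map (Finsupp.lmapDomain k k (fun x : G ⧸ Q => g • x)) ≤ B) →
      Disjoint A B → A ⊔ B = W → A = ⊥ ∨ B = ⊥) ∧
  (∃ φ : ((G ⧸ Q) →₀ k) →ₗ[k] k,
      (∀ (g : G) (v : (G ⧸ Q) →₀ k), φ (Finsupp.lmapDomain k k (fun x : G ⧸ Q => g • x) v) = φ v) ∧
      ¬ W ≤ LinearMap.ker φ)

/-- The `k`-module `M`, with `G` acting through `σ`, is (a model of) the Scott module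
`Sc(G, Q)`: it is `G`-equivariantly isomorphic to a Scott submodule of `k[G/Q]`. -/
def IsScottRep (k : Type) [Field k] {G : Type} [Group G] (Q : Subgroup G)
    {M : Type} [AddCommGroup M] [Module k M] (σ : G →* (M ≃ₗ[k] M)) : Prop :=
  ∃ W : Submodule k ((G ⧸ Q) →₀ k), IsScottSubmodule k Q W ∧
    ∃ e : M ≃ₗ[k] ↥W, ∀ (g : G) (m : M),
      ((e (σ g m) : ↥W) : (G ⧸ Q) →₀ k) =
        Finsupp.lmapDomain k k (fun x : G ⧸ Q => g • x) ((e m : ↥W) : (G ⧸ Q) →₀ k)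

/-!
Since `Z ≤ Q` is normal, it acts trivially on `k[G/Q]`, hence on `Sc(G, Q)`; so `σ` factors
through `Ḡ`, and `Sc(G, Q) ⊗_{kG} kḠ` is just `Sc(G, Q)` with `Ḡ` acting on the right.  As
`G/Q ≅ Ḡ/Q̄` as `G`-sets, `Sc(G, Q)` viewed as a `kḠ`-module is a Scott module for `(Ḡ, Q̄)`, and
it remains to see that Scott modules are unique.  On a transitive permutation module every
invariant functional is a multiple of the augmentation `ε`, so the equivariant projections `P₁`,
`P₂` onto two Scott summands `W₁`, `W₂` preserve `ε`.  Then `P₁ P₂` is not nilpotent, so by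
Fitting's lemma it is injective on the indecomposable summand `W₁`.  By symmetry and a dimension
count, `P₂` restricts to an equivariant isomorphism `W₁ ≅ W₂`.
-/

section ScottSummand

variable {k G V : Type*} [Field k] [AddCommGroup V] [Module k V]

namespace Submodule

def IsInvariant (ρ : G → Module.End k V) (p : Submodule k V) : Prop :=
  ∀ g, p.map (ρ g) ≤ p

def IsIndecomposable (ρ : G → Module.End k V) (W : Submodule k V) : Prop :=
  ∀ A B : Submodule k V, A ≤ W → B ≤ W → A.IsInvariant ρ → B.IsInvariant ρ →
    Disjoint A B → A ⊔ B = W → A = ⊥ ∨ B = ⊥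

end Submodule

/-- The conditions of `IsScottSubmodule`, for an arbitrary family `ρ` of operators on `V`. -/
def IsScottSummand (ρ : G → Module.End k V) (W : Submodule k V) : Prop :=
  W.IsInvariant ρ ∧ (∃ C : Submodule k V, C.IsInvariant ρ ∧ IsCompl W C) ∧ W ≠ ⊥ ∧
    W.IsIndecomposable ρ ∧ ∃ φ : V →ₗ[k] k, (∀ g v, φ (ρ g v) = φ v) ∧ ¬ W ≤ LinearMap.ker φ

lemma isScottSubmodule_iff {G : Type} [Group G] {k : Type} [Field k] {Q : Subgroup G}
    {W : Submodule k ((G ⧸ Q) →₀ k)} :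
    IsScottSubmodule k Q W ↔
      IsScottSummand (fun g : G => Finsupp.lmapDomain k k (fun x : G ⧸ Q => g • x)) W :=
  Iff.rfl

lemma Commute.map_ker_le {f T : Module.End k V} (h : Commute f T) :
    (LinearMap.ker f).map T ≤ LinearMap.ker f := by
  rintro _ ⟨x, hx, rfl⟩
  rw [SetLike.mem_coe, LinearMap.mem_ker] at hx
  rw [LinearMap.mem_ker, ← Module.End.mul_apply, h.eq, Module.End.mul_apply, hx, map_zero]

lemma Commute.map_range_le {f T : Module.End k V} (h : Commute f T) :
    (LinearMap.range f).map T ≤ LinearMap.range f := by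
  rintro _ ⟨_, ⟨x, rfl⟩, rfl⟩
  exact ⟨T x, by rw [← Module.End.mul_apply, h.eq, Module.End.mul_apply]⟩

lemma commute_projection {T : Module.End k V} {W C : Submodule k V} (h : IsCompl W C)
    (hW : W.map T ≤ W) (hC : C.map T ≤ C) : Commute (W.projection C h) T :=
  (LinearMap.IsIdempotentElem.commute_iff (Submodule.isIdempotentElem_projection h)).mpr
    ⟨by rwa [Submodule.range_projection, Module.End.mem_invtSubmodule_iff_map_le],
      by rwa [Submodule.ker_projection, Module.End.mem_invtSubmodule_iff_map_le]⟩

/-- Fitting's lemma: `V = ker fⁿ ⊕ range fⁿ` for large `n` splits `W` into invariant pieces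
`(W ⊓ ker fⁿ) ⊕ range fⁿ`. -/
theorem Submodule.IsIndecomposable.disjoint_ker_or_isNilpotent [FiniteDimensional k V]
    {ρ : G → Module.End k V} {W : Submodule k V} (hind : W.IsIndecomposable ρ)
    (hW : W.IsInvariant ρ) {f : Module.End k V} (hf : ∀ g, Commute f (ρ g))
    (hfW : LinearMap.range f ≤ W) :
    Disjoint W (LinearMap.ker f) ∨ IsNilpotent f := by
  obtain ⟨n, hcompl⟩ := ((Filter.tendsto_add_atTop_nat 1).eventually
    f.eventually_isCompl_ker_pow_range_pow).exists
  have hrange : LinearMap.range (f ^ (n + 1)) ≤ W := by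
    rw [pow_succ', Module.End.mul_eq_comp]
    exact (LinearMap.range_comp_le_range _ _).trans hfW
  have hker : LinearMap.ker f ≤ LinearMap.ker (f ^ (n + 1)) := by
    rw [pow_succ, Module.End.mul_eq_comp]
    exact LinearMap.ker_le_ker_comp _ _
  have hker_inv : (W ⊓ LinearMap.ker (f ^ (n + 1))).IsInvariant ρ := fun g =>
    (Submodule.map_inf_le _).trans (inf_le_inf (hW g) ((hf g).pow_left (n + 1)).map_ker_le)
  have hsup : W ⊓ LinearMap.ker (f ^ (n + 1)) ⊔ LinearMap.range (f ^ (n + 1)) = W := by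
    rw [sup_comm, inf_comm, ← sup_inf_assoc_of_le _ hrange, sup_comm, hcompl.sup_eq_top,
      top_inf_eq]
  rcases hind _ _ inf_le_left hrange hker_inv (fun g => ((hf g).pow_left (n + 1)).map_range_le)
    (hcompl.disjoint.mono_left inf_le_right) hsup with h | h
  · exact Or.inl (disjoint_iff.mpr (eq_bot_iff.mpr (h ▸ inf_le_inf_left W hker)))
  · exact Or.inr ⟨n + 1, LinearMap.range_eq_bot.mp h⟩

end ScottSummand

section Uniqueness

variable {k G V : Type*} [Field k] [AddCommGroup V] [Module k V]
  {ρ : G → Module.End k V} {φ₀ : V →ₗ[k] k}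

lemma IsScottSummand.not_le_ker {W : Submodule k V}
    (hspan : ∀ φ : V →ₗ[k] k, (∀ g v, φ (ρ g v) = φ v) → ∃ c : k, φ = c • φ₀)
    (hW : IsScottSummand ρ W) : ¬ W ≤ LinearMap.ker φ₀ := by
  obtain ⟨-, -, -, -, φ, hφ, hWφ⟩ := hW
  obtain ⟨c, rfl⟩ := hspan φ hφ
  exact fun h => hWφ (h.trans fun v hv => by simp_all)

lemma comp_projection_eq_self (hφ₀ : ∀ g v, φ₀ (ρ g v) = φ₀ v)
    (hspan : ∀ φ : V →ₗ[k] k, (∀ g v, φ (ρ g v) = φ v) → ∃ c : k, φ = c • φ₀)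
    {W C : Submodule k V} (h : IsCompl W C) (hW : W.IsInvariant ρ) (hC : C.IsInvariant ρ)
    (hWφ : ¬ W ≤ LinearMap.ker φ₀) : φ₀ ∘ₗ W.projection C h = φ₀ := by
  obtain ⟨c, hc⟩ := hspan (φ₀ ∘ₗ W.projection C h) fun g v => by
    rw [LinearMap.comp_apply, LinearMap.comp_apply, ← Module.End.mul_apply,
      (commute_projection h (hW g) (hC g)).eq, Module.End.mul_apply, hφ₀]
  obtain ⟨w, hw, hwφ⟩ := SetLike.not_le_iff_exists.mp hWφ
  have hcw : φ₀ w = c * φ₀ w := by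
    simpa [Submodule.projection_apply_of_mem_left h hw] using LinearMap.congr_fun hc w
  rw [hc, mul_right_cancel₀ hwφ (hcw.symm.trans (one_mul _).symm), one_smul]

lemma IsScottSummand.disjoint_ker_projection [FiniteDimensional k V]
    (hφ₀ : ∀ g v, φ₀ (ρ g v) = φ₀ v)
    (hspan : ∀ φ : V →ₗ[k] k, (∀ g v, φ (ρ g v) = φ v) → ∃ c : k, φ = c • φ₀)
    {W₁ W₂ C₂ : Submodule k V} (h₁ : IsScottSummand ρ W₁) (h : IsCompl W₂ C₂)
    (hW₂ : W₂.IsInvariant ρ) (hC₂ : C₂.IsInvariant ρ) (hW₂φ : ¬ W₂ ≤ LinearMap.ker φ₀) :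
    Disjoint W₁ (LinearMap.ker (W₂.projection C₂ h)) := by
  have hW₁φ := h₁.not_le_ker hspan
  obtain ⟨hW₁, ⟨C₁, hC₁, h'⟩, -, hind, -⟩ := h₁
  set f := W₁.projection C₁ h' * W₂.projection C₂ h with hf
  have hφf : φ₀ ∘ₗ f = φ₀ := by
    rw [hf, Module.End.mul_eq_comp, ← LinearMap.comp_assoc,
      comp_projection_eq_self hφ₀ hspan h' hW₁ hC₁ hW₁φ, comp_projection_eq_self hφ₀ hspan h hW₂ hC₂ hW₂φ]
  have hφfn : ∀ n, φ₀ ∘ₗ f ^ n = φ₀ := by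
    intro n
    induction n with
    | zero => rfl
    | succ n ih => rw [pow_succ, Module.End.mul_eq_comp, ← LinearMap.comp_assoc, ih, hφf]
  -- `φ₀ ∘ f = φ₀ ≠ 0` rules out the nilpotent alternative of Fitting's lemma.
  rcases hind.disjoint_ker_or_isNilpotent hW₁
      (fun g => (commute_projection h' (hW₁ g) (hC₁ g)).mul_left
        (commute_projection h (hW₂ g) (hC₂ g)))
      ((LinearMap.range_comp_le_range _ _).trans (Submodule.range_projection h').le)
    with hdis | ⟨n, hn⟩
  · exact hdis.mono_right (LinearMap.ker_le_ker_comp _ _)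
  · refine absurd (fun v _ => ?_) hW₁φ
    rw [LinearMap.mem_ker, ← hφfn n, hn, LinearMap.comp_zero, LinearMap.zero_apply]

theorem IsScottSummand.exists_linearEquiv [FiniteDimensional k V]
    (hφ₀ : ∀ g v, φ₀ (ρ g v) = φ₀ v)
    (hspan : ∀ φ : V →ₗ[k] k, (∀ g v, φ (ρ g v) = φ v) → ∃ c : k, φ = c • φ₀)
    {W₁ W₂ : Submodule k V} (h₁ : IsScottSummand ρ W₁) (h₂ : IsScottSummand ρ W₂) :
    ∃ P : Module.End k V, (∀ g, Commute P (ρ g)) ∧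
      ∃ u : W₁ ≃ₗ[k] W₂, ∀ w, (u w : V) = P w := by
  obtain ⟨hW₁, ⟨C₁, hC₁, hc₁⟩, -⟩ := id h₁
  obtain ⟨hW₂, ⟨C₂, hC₂, hc₂⟩, -⟩ := id h₂
  have hinj₁₂ : Function.Injective (W₂.projectionOnto C₂ hc₂ ∘ₗ W₁.subtype) :=
    Function.Injective.of_comp (f := W₂.subtype) <| LinearMap.injective_domRestrict_iff.mpr <|
      h₁.disjoint_ker_projection hφ₀ hspan hc₂ hW₂ hC₂ (h₂.not_le_ker hspan)
  have hinj₂₁ : Function.Injective (W₁.projectionOnto C₁ hc₁ ∘ₗ W₂.subtype) :=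
    Function.Injective.of_comp (f := W₁.subtype) <| LinearMap.injective_domRestrict_iff.mpr <|
      h₂.disjoint_ker_projection hφ₀ hspan hc₁ hW₁ hC₁ (h₁.not_le_ker hspan)
  have hrank : Module.finrank k W₁ = Module.finrank k W₂ :=
    (LinearMap.finrank_le_finrank_of_injective hinj₁₂).antisymm
      (LinearMap.finrank_le_finrank_of_injective hinj₂₁)
  exact ⟨W₂.projection C₂ hc₂, fun g => commute_projection hc₂ (hW₂ g) (hC₂ g),
    .ofBijective _
      ⟨hinj₁₂, (LinearMap.injective_iff_surjective_of_finrank_eq_finrank hrank).mp hinj₁₂⟩,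
    fun _ => rfl⟩

end Uniqueness

section PermutationModule

variable {k G X : Type*} [CommSemiring k] [Group G] [MulAction G X]

lemma linearCombination_one_lmapDomain {Y : Type*} (f : X → Y) (v : X →₀ k) :
    Finsupp.linearCombination k (fun _ => (1 : k)) (Finsupp.lmapDomain k k f v) =
      Finsupp.linearCombination k (fun _ => (1 : k)) v := by
  rw [Finsupp.lmapDomain_apply, Finsupp.linearCombination_mapDomain]
  rfl

theorem eq_smul_linearCombination_one [MulAction.IsPretransitive G X] (x₀ : X)
    {φ : (X →₀ k) →ₗ[k] k}
    (hφ : ∀ (g : G) v, φ (Finsupp.lmapDomain k k (fun x : X => g • x) v) = φ v) :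
    φ = φ (Finsupp.single x₀ 1) • Finsupp.linearCombination k (fun _ => (1 : k)) := by
  ext x
  obtain ⟨g, rfl⟩ := MulAction.exists_smul_eq G x₀ x
  simpa [Finsupp.mapDomain_single] using hφ g (Finsupp.single x₀ 1)

end PermutationModule

theorem IsScottRep.exists_linearEquiv {k G : Type} [Field k] [Group G] [Finite G]
    {Q : Subgroup G} {M₁ M₂ : Type} [AddCommGroup M₁] [Module k M₁] [AddCommGroup M₂]
    [Module k M₂] {σ₁ : G →* (M₁ ≃ₗ[k] M₁)} {σ₂ : G →* (M₂ ≃ₗ[k] M₂)}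
    (h₁ : IsScottRep k Q σ₁) (h₂ : IsScottRep k Q σ₂) :
    ∃ ψ : M₁ ≃ₗ[k] M₂, ∀ g m, ψ (σ₁ g m) = σ₂ g (ψ m) := by
  obtain ⟨W₁, hW₁, e₁, he₁⟩ := h₁
  obtain ⟨W₂, hW₂, e₂, he₂⟩ := h₂
  obtain ⟨P, hP, u, hu⟩ := IsScottSummand.exists_linearEquiv
    (fun _ v => linearCombination_one_lmapDomain _ v)
    (fun φ hφ => ⟨_, eq_smul_linearCombination_one (QuotientGroup.mk 1) hφ⟩) hW₁ hW₂
  refine ⟨(e₁.trans u).trans e₂.symm, fun g m => e₂.injective (Subtype.ext ?_)⟩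
  simp only [LinearEquiv.trans_apply, he₂, LinearEquiv.apply_symm_apply, hu, he₁]
  rw [← Module.End.mul_apply, (hP g).eq, Module.End.mul_apply]

theorem IsScottSummand.map {k G V V' : Type*} [Field k] [AddCommGroup V] [Module k V]
    [AddCommGroup V'] [Module k V'] {ρ : G → Module.End k V} {ρ' : G → Module.End k V'}
    (L : V ≃ₗ[k] V') (hL : ∀ g, (L : V →ₗ[k] V') ∘ₗ ρ g = ρ' g ∘ₗ L)
    {W : Submodule k V} (h : IsScottSummand ρ W) :
    IsScottSummand ρ' (W.map (L : V →ₗ[k] V')) := by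
  obtain ⟨hW, ⟨C, hC, hWC⟩, hne, hind, φ, hφ, hWφ⟩ := h
  have hinv : ∀ p : Submodule k V, (p.map (L : V →ₗ[k] V')).IsInvariant ρ' ↔ p.IsInvariant ρ :=
    fun p => forall_congr' fun g => by
      rw [← Submodule.map_comp, ← hL, Submodule.map_comp,
        Submodule.map_le_map_iff_of_injective L.injective]
  have hL' : ∀ g v, L.symm (ρ' g v) = ρ g (L.symm v) := fun g v => by
    rw [L.symm_apply_eq]
    simpa using (LinearMap.congr_fun (hL g) (L.symm v)).symm
  refine ⟨(hinv W).mpr hW, ⟨C.map (L : V →ₗ[k] V'), (hinv C).mpr hC,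
    (Submodule.orderIsoMapComap L).isCompl hWC⟩,
    mt Submodule.map_eq_bot_iff.mp hne, ?_, φ ∘ₗ L.symm.toLinearMap, ?_, ?_⟩
  · intro A B hA hB hAi hBi hdis hsup
    obtain ⟨A, rfl⟩ : ∃ A₀ : Submodule k V, A₀.map (L : V →ₗ[k] V') = A :=
      ⟨A.comap (L : V →ₗ[k] V'), Submodule.map_comap_eq_of_surjective L.surjective A⟩
    obtain ⟨B, rfl⟩ : ∃ B₀ : Submodule k V, B₀.map (L : V →ₗ[k] V') = B :=
      ⟨B.comap (L : V →ₗ[k] V'), Submodule.map_comap_eq_of_surjective L.surjective B⟩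
    rw [Submodule.map_le_map_iff_of_injective L.injective] at hA hB
    rw [hinv] at hAi hBi
    rw [← Submodule.map_sup, (Submodule.map_injective_of_injective L.injective).eq_iff] at hsup
    simpa only [Submodule.map_eq_bot_iff] using hind A B hA hB hAi hBi
      ((disjoint_map_orderIso_iff (Submodule.orderIsoMapComap L)).mp hdis) hsup
  · intro g v
    rw [LinearMap.comp_apply, LinearMap.comp_apply, LinearEquiv.coe_toLinearMap, hL', hφ]
  · rwa [LinearMap.ker_comp, Submodule.comap_equiv_eq_map_symm, LinearEquiv.symm_symm,
      Submodule.map_le_map_iff_of_injective L.injective]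

theorem isScottSummand_comp_iff {k G H V : Type*} [Field k] [AddCommGroup V] [Module k V]
    {π : G → H} (hπ : Function.Surjective π) {ρ : H → Module.End k V} {W : Submodule k V} :
    IsScottSummand (ρ ∘ π) W ↔ IsScottSummand ρ W := by
  have hinv : ∀ p : Submodule k V, p.IsInvariant (ρ ∘ π) ↔ p.IsInvariant ρ := fun p =>
    (hπ.forall (p := fun h => p.map (ρ h) ≤ p)).symm
  have hfun : ∀ φ : V →ₗ[k] k, (∀ g v, φ ((ρ ∘ π) g v) = φ v) ↔ ∀ h v, φ (ρ h v) = φ v :=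
    fun φ => (hπ.forall (p := fun h => ∀ v, φ (ρ h v) = φ v)).symm
  simp only [IsScottSummand, Submodule.IsIndecomposable, hinv, hfun]

lemma domLCongr_comp_lmapDomain {k X Y : Type*} [Semiring k] (ε : X ≃ Y) {a : X → X} {b : Y → Y}
    (h : ∀ x, ε (a x) = b (ε x)) :
    (Finsupp.domLCongr ε).toLinearMap ∘ₗ Finsupp.lmapDomain k k a =
      Finsupp.lmapDomain k k b ∘ₗ (Finsupp.domLCongr ε).toLinearMap :=
  Finsupp.lhom_ext fun x c => by simp [h]

section CosetSpaces

variable {G : Type*} [Group G]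

noncomputable def quotientEquivQuotientMap (Q Z : Subgroup G) [Z.Normal] (hZQ : Z ≤ Q) :
    G ⧸ Q ≃ (G ⧸ Z) ⧸ Q.map (QuotientGroup.mk' Z) := by
  refine .ofBijective (Quotient.map' (QuotientGroup.mk' Z) fun a b h => ?_) ⟨?_, ?_⟩
  · rw [QuotientGroup.leftRel_apply] at h ⊢
    simpa using Subgroup.mem_map_of_mem (QuotientGroup.mk' Z) h
  · intro a b h
    induction a using QuotientGroup.induction_on with | H a =>
    induction b using QuotientGroup.induction_on with | H b =>
    have h' : QuotientGroup.mk' Z (a⁻¹ * b) ∈ Q.map (QuotientGroup.mk' Z) :=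
      QuotientGroup.eq.mp (show (QuotientGroup.mk (QuotientGroup.mk' Z a) :
        (G ⧸ Z) ⧸ Q.map (QuotientGroup.mk' Z)) = QuotientGroup.mk (QuotientGroup.mk' Z b) from h)
    rw [← Subgroup.mem_comap, Subgroup.comap_map_eq, QuotientGroup.ker_mk',
      sup_eq_left.mpr hZQ] at h'
    exact QuotientGroup.eq.mpr h'
  · rintro ⟨⟨g⟩⟩
    exact ⟨QuotientGroup.mk g, rfl⟩

lemma quotientEquivQuotientMap_smul (Q Z : Subgroup G) [Z.Normal] (hZQ : Z ≤ Q) (g : G)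
    (x : G ⧸ Q) :
    quotientEquivQuotientMap Q Z hZQ (g • x) =
      (QuotientGroup.mk g : G ⧸ Z) • quotientEquivQuotientMap Q Z hZQ x := by
  induction x using QuotientGroup.induction_on
  rfl

lemma smul_eq_self_of_mem_of_le {N Q : Subgroup G} [N.Normal] (hNQ : N ≤ Q) {z : G} (hz : z ∈ N)
    (x : G ⧸ Q) : z • x = x := by
  have : z ∈ (MulAction.toPermHom G (G ⧸ Q)).ker :=
    Q.normalCore_eq_ker ▸ Subgroup.normal_le_normalCore.mpr hNQ hz
  exact congr($this x)

end CosetSpaces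

theorem IsScottRep.le_ker {k : Type} [Field k] {G : Type} [Group G] {Q N : Subgroup G} [N.Normal]
    (hNQ : N ≤ Q) {M : Type} [AddCommGroup M] [Module k M] {σ : G →* (M ≃ₗ[k] M)}
    (h : IsScottRep k Q σ) : N ≤ σ.ker := by
  obtain ⟨W, -, e, he⟩ := h
  intro z hz
  have hz_id : (fun x : G ⧸ Q => z • x) = id := funext (smul_eq_self_of_mem_of_le hNQ hz)
  refine MonoidHom.mem_ker.mpr (LinearEquiv.ext fun m => e.injective (Subtype.ext ?_))
  rw [he, hz_id, Finsupp.lmapDomain_id]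
  rfl

theorem IsScottRep.of_comp_mk' {k : Type} [Field k] {G : Type} [Group G] {Q Z : Subgroup G}
    [Z.Normal] (hZQ : Z ≤ Q) {M : Type} [AddCommGroup M] [Module k M]
    {τ : G ⧸ Z →* (M ≃ₗ[k] M)} (h : IsScottRep k Q (τ.comp (QuotientGroup.mk' Z))) :
    IsScottRep k (Q.map (QuotientGroup.mk' Z)) τ := by
  obtain ⟨W, hW, e, he⟩ := h
  let L : ((G ⧸ Q) →₀ k) ≃ₗ[k] (((G ⧸ Z) ⧸ Q.map (QuotientGroup.mk' Z)) →₀ k) :=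
    Finsupp.domLCongr (quotientEquivQuotientMap Q Z hZQ)
  have hL : ∀ g : G, L.toLinearMap ∘ₗ Finsupp.lmapDomain k k (fun x : G ⧸ Q => g • x) =
      Finsupp.lmapDomain k k (fun x => (QuotientGroup.mk g : G ⧸ Z) • x) ∘ₗ L.toLinearMap :=
    fun g => domLCongr_comp_lmapDomain _ (quotientEquivQuotientMap_smul Q Z hZQ g)
  refine ⟨W.map (L : _ →ₗ[k] _),
    (isScottSummand_comp_iff (ρ := fun h => Finsupp.lmapDomain k k (h • ·))
      QuotientGroup.mk_surjective).mp ((isScottSubmodule_iff.mp hW).map L hL),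
    e.trans (L.submoduleMap W), fun h m => ?_⟩
  obtain ⟨g, rfl⟩ := QuotientGroup.mk_surjective h
  have := LinearMap.congr_fun (hL g) (e m)
  simp only [LinearMap.comp_apply, ← he] at this
  exact this


section BalancedTensor

variable {k G H M : Type*} [CommRing k] [Group G] [Group H] [AddCommGroup M] [Module k M]

/-- `M` as a right `k[H]`-module, `m • h = τ h⁻¹ m`; it is an algebra map into `(End M)ᵐᵒᵖ`. -/
noncomputable def rightAction (τ : H →* (M ≃ₗ[k] M)) : MonoidAlgebra k H →ₗ[k] Module.End k M :=
  (MulOpposite.opLinearEquiv k).symm.toLinearMap ∘ₗ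
    (MonoidAlgebra.lift k (Module.End k M)ᵐᵒᵖ H
      ((MonoidHom.op (LinearEquiv.automorphismGroup.toLinearMapMonoidHom.comp τ)).comp
        (MulEquiv.inv' H).toMonoidHom)).toLinearMap

lemma rightAction_single (τ : H →* (M ≃ₗ[k] M)) (h : H) (c : k) :
    rightAction τ (MonoidAlgebra.single h c) = c • (τ h⁻¹ : Module.End k M) := by
  simp [rightAction]

lemma rightAction_mul (τ : H →* (M ≃ₗ[k] M)) (x y : MonoidAlgebra k H) :
    rightAction τ (x * y) = rightAction τ y * rightAction τ x := by
  simp [rightAction]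

variable (σ : G →* (M ≃ₗ[k] M)) (π : G →* H)

/-- The relations `m • g ⊗ x = m ⊗ π g • x` presenting `M ⊗_{kG} kH` as a quotient of
`M ⊗_k kH`. -/
noncomputable def balancingSubmodule : Submodule k (M ⊗[k] MonoidAlgebra k H) :=
  Submodule.span k {y | ∃ (g : G) (m : M) (x : MonoidAlgebra k H),
    y = σ g⁻¹ m ⊗ₜ[k] x - m ⊗ₜ[k] (MonoidAlgebra.single (π g) (1 : k) * x)}

theorem exists_balancedTensor_equiv (hπ : Function.Surjective π) (τ : H →* (M ≃ₗ[k] M))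
    (hσ : ∀ g, σ g = τ (π g)) :
    ∃ E : ((M ⊗[k] MonoidAlgebra k H) ⧸ balancingSubmodule σ π) ≃ₗ[k] M,
      ∀ m x, E (Submodule.Quotient.mk (m ⊗ₜ[k] x)) = rightAction τ x m := by
  set N := balancingSubmodule σ π
  let θ : M ⊗[k] MonoidAlgebra k H →ₗ[k] M := TensorProduct.lift (rightAction τ).flip
  have hσ' : ∀ g, rightAction τ (MonoidAlgebra.single (π g) 1) = (σ g⁻¹ : Module.End k M) := by
    simp [rightAction_single, hσ]
  have hN : N ≤ LinearMap.ker θ := Submodule.span_le.mpr <| by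
    rintro _ ⟨g, m, x, rfl⟩
    rw [SetLike.mem_coe, LinearMap.mem_ker, map_sub, sub_eq_zero]
    simp only [θ, TensorProduct.lift.tmul, LinearMap.flip_apply, rightAction_mul,
      Module.End.mul_apply, hσ']
    rfl
  let ι : M →ₗ[k] (M ⊗[k] MonoidAlgebra k H) ⧸ N :=
    N.mkQ ∘ₗ (TensorProduct.mk k M (MonoidAlgebra k H)).flip 1
  have hι : ∀ m x, ι (rightAction τ x m) = Submodule.Quotient.mk (m ⊗ₜ x) := by
    intro m x
    induction x using MonoidAlgebra.induction_linear with
    | zero => simp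
    | add x y hx hy => simp [TensorProduct.tmul_add, hx, hy]
    | single h c =>
      obtain ⟨g, rfl⟩ := hπ h
      have hrel : σ g⁻¹ m ⊗ₜ[k] MonoidAlgebra.single 1 c -
          m ⊗ₜ[k] (MonoidAlgebra.single (π g) 1 * MonoidAlgebra.single 1 c) ∈ N :=
        Submodule.subset_span ⟨g, m, _, rfl⟩
      rw [MonoidAlgebra.single_mul_single, mul_one, one_mul] at hrel
      rw [← (Submodule.Quotient.eq N).mpr hrel]
      simp only [ι, LinearMap.comp_apply, rightAction_single, hσ, map_inv,
        LinearMap.smul_apply, Submodule.mkQ_apply, TensorProduct.mk_apply, LinearMap.flip_apply]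
      rw [TensorProduct.smul_tmul, MonoidAlgebra.one_def,
        MonoidAlgebra.smul_single, smul_eq_mul, mul_one]
      rfl
  refine ⟨.ofLinearMap (N.liftQ θ hN) ι ?_ ?_, fun _ _ => rfl⟩
  · ext m
    simp [ι, θ, MonoidAlgebra.one_def, rightAction_single]
  · apply Submodule.linearMap_qext
    apply TensorProduct.ext'
    intro m x
    exact hι m x

end BalancedTensor

theorem scott_tensor_quotient_iso_general
    (k : Type) [Field k]
    (G : Type) [Group G] [Finite G] (Q Z : Subgroup G) [Z.Normal]
    (hZ : Z ≤ Subgroup.center G ⊓ Q)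
    (M : Type) [AddCommGroup M] [Module k M]
    (σ : G →* (M ≃ₗ[k] M)) (hM : IsScottRep k Q σ)
    (Mbar : Type) [AddCommGroup Mbar] [Module k Mbar]
    (σbar : (G ⧸ Z) →* (Mbar ≃ₗ[k] Mbar))
    (hMbar : IsScottRep k (Q.map (QuotientGroup.mk' Z)) σbar) :
    ∃ E : ((M ⊗[k] MonoidAlgebra k (G ⧸ Z)) ⧸
        (Submodule.span k {y : M ⊗[k] MonoidAlgebra k (G ⧸ Z) |
          ∃ (g : G) (m : M) (x : MonoidAlgebra k (G ⧸ Z)),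
            y = (σ g⁻¹ m) ⊗ₜ[k] x -
              m ⊗ₜ[k] (MonoidAlgebra.single (QuotientGroup.mk g : G ⧸ Z) (1 : k) * x)}))
        ≃ₗ[k] Mbar,
      ∀ (m : M) (x : MonoidAlgebra k (G ⧸ Z)) (g : G),
        E (Submodule.Quotient.mk
            (m ⊗ₜ[k] (x * MonoidAlgebra.single (QuotientGroup.mk g : G ⧸ Z) (1 : k)))) =
          σbar (QuotientGroup.mk g : G ⧸ Z)⁻¹
            (E (Submodule.Quotient.mk (m ⊗ₜ[k] x))) := by
  have hZQ : Z ≤ Q := fun _ hz => (hZ hz).2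
  let τ : G ⧸ Z →* (M ≃ₗ[k] M) := QuotientGroup.lift Z σ (hM.le_ker hZQ)
  obtain ⟨ψ, hψ⟩ := (IsScottRep.of_comp_mk' hZQ (τ := τ) hM).exists_linearEquiv hMbar
  obtain ⟨E, hE⟩ := exists_balancedTensor_equiv σ (QuotientGroup.mk' Z)
    (QuotientGroup.mk'_surjective Z) τ fun _ => rfl
  refine ⟨E.trans ψ, fun m x g => ?_⟩
  show ψ (E (Submodule.Quotient.mk _)) = σbar _ (ψ (E (Submodule.Quotient.mk _)))
  rw [hE, hE, rightAction_mul, rightAction_single, one_smul, Module.End.mul_apply,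
    LinearEquiv.coe_coe, hψ]

/-- Let `k` be a field of characteristic `p > 0`, `G` a finite group, `Q ≤ G` a subgroup,
`Z ≤ Z(G) ∩ Q`, and write `Ḡ = G/Z`, `Q̄ = Q/Z`.  Then
`Sc(G, Q) ⊗_{kG} kḠ ≅ Sc(Ḡ, Q̄)` as right `kḠ`-modules.  Here the Scott module `M`, a
right `kG`-module via `m·g := σ(g⁻¹) m`, is tensored over `kG` with `kḠ` by taking the
quotient of `M ⊗_k kḠ` by the balancing relations `m·g ⊗ x - m ⊗ ḡ·x`; the conclusion
produces, for every model `M̄` of `Sc(Ḡ, Q̄)`, a `k`-linear isomorphism which is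
equivariant for the right `Ḡ`-actions. -/
theorem scott_tensor_quotient_iso
    (k : Type) [Field k] (p : ℕ) (hp : p.Prime) [CharP k p]
    (G : Type) [Group G] [Finite G] (Q Z : Subgroup G) [Z.Normal]
    (hZ : Z ≤ Subgroup.center G ⊓ Q)
    (M : Type) [AddCommGroup M] [Module k M]
    (σ : G →* (M ≃ₗ[k] M)) (hM : IsScottRep k Q σ)
    (Mbar : Type) [AddCommGroup Mbar] [Module k Mbar]
    (σbar : (G ⧸ Z) →* (Mbar ≃ₗ[k] Mbar))
    (hMbar : IsScottRep k (Q.map (QuotientGroup.mk' Z)) σbar) :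
    ∃ E : ((M ⊗[k] MonoidAlgebra k (G ⧸ Z)) ⧸
        (Submodule.span k {y : M ⊗[k] MonoidAlgebra k (G ⧸ Z) |
          ∃ (g : G) (m : M) (x : MonoidAlgebra k (G ⧸ Z)),
            y = (σ g⁻¹ m) ⊗ₜ[k] x -
              m ⊗ₜ[k] (MonoidAlgebra.single (QuotientGroup.mk g : G ⧸ Z) (1 : k) * x)}))
        ≃ₗ[k] Mbar,
      ∀ (m : M) (x : MonoidAlgebra k (G ⧸ Z)) (g : G),
        E (Submodule.Quotient.mk
            (m ⊗ₜ[k] (x * MonoidAlgebra.single (QuotientGroup.mk g : G ⧸ Z) (1 : k)))) =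
          σbar (QuotientGroup.mk g : G ⧸ Z)⁻¹
            (E (Submodule.Quotient.mk (m ⊗ₜ[k] x))) :=
  scott_tensor_quotient_iso_general k G Q Z hZ M σ hM Mbar σbar hMbar
end
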